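/- arXiv:2602.19408 — 2 statements merged into one kernel-verified Lean document; each statement's English description precedes it below -/
import Mathlib

section
/- Let G = (V, E) be a finite directed graph and let M' be a maximum matching of its split bipartite graph G'. Then the path-and-cycle cover of G induced by M' (the components of the subgraph G_F, where F is the set of edges of G pulled back from M') has the minimum number of paths among all path-and-cycle covers of G; in particular, the minimum number of paths over all PC covers of G equals |V| minus the maximum matching size of G'. -/
/-!
Matchings of the split graph inside `splitEdges E` correspond to edge sets `F ⊆ E` in which
every vertex has out- and in-degree at most one. The consecutive pairs along the paths and
cycles of a PC cover with `p` paths form such a set with `|V| - p` edges, so every PC cover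
has at least `|V| - |M|` paths. Conversely, a PC cover of the pulled-back graph `F` with the
fewest paths uses every edge of `F`: an unused edge would lead from the last vertex of a path to
the first vertex of a path, and closing that path into a cycle, or joining the two paths,
would save a path. This cover therefore has `|V| - |F| = |V| - |M|` paths, and its lists are
the weak components of `F`.
-/

open scoped Classical

variable {V : Type*} [DecidableEq V]

/-- In-degree of `v` in the digraph with edge set `E`. -/
def indeg (E : Finset (V × V)) (v : V) : ℕ := (E.filter (fun e => e.2 = v)).card

/-- Out-degree of `v` in the digraph with edge set `E`. -/
def outdeg (E : Finset (V × V)) (v : V) : ℕ := (E.filter (fun e => e.1 = v)).card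

/-- `l` is a simple directed path (possibly a single vertex) in the digraph `E`. -/
def IsDiPath (E : Finset (V × V)) (l : List V) : Prop :=
  l ≠ [] ∧ l.Nodup ∧ l.Chain' (fun u v => (u, v) ∈ E)

/-- `l` is a simple directed cycle in the digraph `E`. -/
def IsDiCycle (E : Finset (V × V)) (l : List V) : Prop :=
  ∃ h : l ≠ [], l.Nodup ∧ l.Chain' (fun u v => (u, v) ∈ E) ∧
    (l.getLast h, l.head h) ∈ E

/-- A path-and-cycle cover (PC cover) of the digraph `E`. -/
structure PCCover (E : Finset (V × V)) where
  paths : Finset (List V)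
  cycles : Finset (List V)
  paths_are : ∀ l ∈ paths, IsDiPath E l
  cycles_are : ∀ l ∈ cycles, IsDiCycle E l
  disj : Disjoint paths cycles
  pairwiseDisj : ∀ l₁ ∈ paths ∪ cycles, ∀ l₂ ∈ paths ∪ cycles, l₁ ≠ l₂ → ∀ v ∈ l₁, v ∉ l₂
  covers : ∀ v : V, ∃ l ∈ paths ∪ cycles, v ∈ l

/-- Edge set of the split bipartite graph of the digraph `E`, on vertex set `V ⊕ V`
(`Sum.inl` is the left copy `f_L`, `Sum.inr` the right copy `f_R`). -/
def splitEdges (E : Finset (V × V)) : Finset ((V ⊕ V) × (V ⊕ V)) :=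
  E.image (fun e => (Sum.inl e.1, Sum.inr e.2))

/-- A set of edges is a matching if no two of its edges share an endpoint. -/
def IsMatching {W : Type*} (M : Finset (W × W)) : Prop :=
  ∀ e₁ ∈ M, ∀ e₂ ∈ M, e₁ ≠ e₂ →
    e₁.1 ≠ e₂.1 ∧ e₁.1 ≠ e₂.2 ∧ e₁.2 ≠ e₂.1 ∧ e₁.2 ≠ e₂.2

/-- The set `F ⊆ E` of edges of `G` pulled back from a matching of the split bipartite graph. -/
def pullback (E : Finset (V × V)) (M : Finset ((V ⊕ V) × (V ⊕ V))) : Finset (V × V) :=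
  E.filter (fun e => (Sum.inl e.1, Sum.inr e.2) ∈ M)

/-- Weak reachability (reachability after forgetting edge directions) in the digraph `F`. -/
def WReach (F : Finset (V × V)) (a b : V) : Prop :=
  Relation.ReflTransGen (fun x y => (x, y) ∈ F ∨ (y, x) ∈ F) a b

open Finset

namespace List

variable {α : Type*}

theorem map_fst_consecutivePairs : ∀ l : List α, l.consecutivePairs.map Prod.fst = l.dropLast
  | [] | [_] => rfl
  | a :: b :: t => congrArg (a :: ·) (map_fst_consecutivePairs (b :: t))

theorem map_snd_consecutivePairs (l : List α) : l.consecutivePairs.map Prod.snd = l.tail :=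
  map_snd_zip (by simp)

theorem length_consecutivePairs (l : List α) : l.consecutivePairs.length = l.length - 1 := by
  rw [consecutivePairs, length_zip, length_tail]
  omega

theorem fst_mem_of_mem_consecutivePairs {l : List α} {p : α × α} (hp : p ∈ l.consecutivePairs) :
    p.1 ∈ l :=
  (of_mem_zip hp).1

theorem snd_mem_of_mem_consecutivePairs {l : List α} {p : α × α} (hp : p ∈ l.consecutivePairs) :
    p.2 ∈ l :=
  tail_subset _ (of_mem_zip hp).2

theorem nodup_consecutivePairs {l : List α} (h : l.dropLast.Nodup) : l.consecutivePairs.Nodup :=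
  ((map_fst_consecutivePairs l).symm ▸ h).of_map _

theorem IsChain.rel_of_mem_consecutivePairs {R : α → α → Prop} :
    ∀ {l : List α}, l.IsChain R → ∀ {p : α × α}, p ∈ l.consecutivePairs → R p.1 p.2
  | [], _, _, hp | [_], _, _, hp => by simp [consecutivePairs] at hp
  | a :: b :: t, h, p, hp => by
    rw [isChain_cons_cons] at h
    rcases mem_cons.1 hp with rfl | hp
    · exact h.1
    · exact h.2.rel_of_mem_consecutivePairs hp

end List

section

variable {V : Type*}

theorem List.IsChain.wReach {F : Finset (V × V)} :
    ∀ {l : List V}, l.IsChain (fun u v => (u, v) ∈ F) → ∀ v ∈ l, ∀ w ∈ l, WReach F v w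
  | [], _ => by simp
  | [_], _ => by
    simp only [List.mem_singleton]
    rintro _ rfl _ rfl
    exact Relation.ReflTransGen.refl
  | a :: b :: t, h => by
    rw [List.isChain_cons_cons] at h
    have ih := h.2.wReach
    have hb : b ∈ b :: t := List.mem_cons_self
    have to_b : ∀ v ∈ a :: b :: t, WReach F v b := by
      rintro v (_ | ⟨_, hv⟩)
      · exact .single (Or.inl h.1)
      · exact ih v hv b hb
    have from_b : ∀ w ∈ a :: b :: t, WReach F b w := by
      rintro w (_ | ⟨_, hw⟩)
      · exact .single (Or.inr h.1)
      · exact ih b hb w hw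
    exact fun v hv w hw => (to_b v hv).trans (from_b w hw)

theorem IsDiPath.mono {E E' : Finset (V × V)} (h : E ⊆ E') {l : List V} (hl : IsDiPath E l) :
    IsDiPath E' l :=
  ⟨hl.1, hl.2.1, hl.2.2.imp fun _ _ hab => h hab⟩

theorem IsDiCycle.mono {E E' : Finset (V × V)} (h : E ⊆ E') {l : List V} (hl : IsDiCycle E l) :
    IsDiCycle E' l :=
  let ⟨hne, hnd, hch, hcl⟩ := hl
  ⟨hne, hnd, hch.imp fun _ _ hab => h hab, h hcl⟩

theorem IsDiPath.append {E : Finset (V × V)} {l₁ l₂ : List V} (h₁ : IsDiPath E l₁)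
    (h₂ : IsDiPath E l₂) (hdisj : ∀ v ∈ l₁, v ∉ l₂)
    (hE : ∀ x ∈ l₁.getLast?, ∀ y ∈ l₂.head?, (x, y) ∈ E) : IsDiPath E (l₁ ++ l₂) :=
  ⟨by simp [h₁.1], List.nodup_append.2 ⟨h₁.2.1, h₂.2.1, fun v hv w hw hvw => hdisj v hv (hvw ▸ hw)⟩,
    List.isChain_append.2 ⟨h₁.2.2, h₂.2.2, hE⟩⟩

def splitEdge (e : V × V) : (V ⊕ V) × (V ⊕ V) := (Sum.inl e.1, Sum.inr e.2)

theorem splitEdge_injective : Function.Injective (splitEdge (V := V)) := by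
  rintro ⟨a, b⟩ ⟨c, d⟩ h
  simpa [splitEdge] using h

end

theorem isMatching_image_splitEdge {F : Finset (V × V)}
    (hfst : Set.InjOn Prod.fst (F : Set (V × V))) (hsnd : Set.InjOn Prod.snd (F : Set (V × V))) :
    IsMatching (F.image splitEdge) := by
  simp only [IsMatching, mem_image]
  rintro _ ⟨p, hp, rfl⟩ _ ⟨q, hq, rfl⟩ hpq
  have hpq : p ≠ q := fun h => hpq (h ▸ rfl)
  simp only [splitEdge, ne_eq, Sum.inl.injEq, Sum.inr.injEq, reduceCtorEq, not_false_eq_true,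
    true_and]
  exact ⟨fun h => hpq (hfst hp hq h), fun h => hpq (hsnd hp hq h)⟩

theorem image_splitEdge_pullback {E : Finset (V × V)} {M : Finset ((V ⊕ V) × (V ⊕ V))}
    (hsub : M ⊆ splitEdges E) : (pullback E M).image splitEdge = M := by
  ext m
  simp only [mem_image, pullback, mem_filter]
  refine ⟨fun ⟨e, ⟨_, he⟩, hem⟩ => hem ▸ he, fun hm => ?_⟩
  obtain ⟨e, he, rfl⟩ := mem_image.1 (hsub hm)
  exact ⟨e, ⟨he, hm⟩, rfl⟩

theorem card_pullback {E : Finset (V × V)} {M : Finset ((V ⊕ V) × (V ⊕ V))}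
    (hsub : M ⊆ splitEdges E) : #(pullback E M) = #M := by
  rw [← card_image_of_injective _ splitEdge_injective, image_splitEdge_pullback hsub]

theorem injOn_fst_pullback {E : Finset (V × V)} {M : Finset ((V ⊕ V) × (V ⊕ V))}
    (hmatch : IsMatching M) : Set.InjOn Prod.fst (pullback E M : Set (V × V)) := by
  intro p hp q hq h
  by_contra hpq
  have := (hmatch _ (mem_filter.1 hp).2 _ (mem_filter.1 hq).2 (splitEdge_injective.ne hpq)).1
  simp [h] at this

theorem injOn_snd_pullback {E : Finset (V × V)} {M : Finset ((V ⊕ V) × (V ⊕ V))}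
    (hmatch : IsMatching M) : Set.InjOn Prod.snd (pullback E M : Set (V × V)) := by
  intro p hp q hq h
  by_contra hpq
  have := (hmatch _ (mem_filter.1 hp).2 _ (mem_filter.1 hq).2 (splitEdge_injective.ne hpq)).2.2.2
  simp [h] at this

namespace PCCover

variable {E : Finset (V × V)}

def mono {E' : Finset (V × V)} (h : E ⊆ E') (C : PCCover E) : PCCover E' where
  paths := C.paths
  cycles := C.cycles
  paths_are l hl := (C.paths_are l hl).mono h
  cycles_are l hl := (C.cycles_are l hl).mono h
  disj := C.disj
  pairwiseDisj := C.pairwiseDisj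
  covers := C.covers

def singletons [Fintype V] (E : Finset (V × V)) : PCCover E where
  paths := univ.image fun v => [v]
  cycles := ∅
  paths_are l hl := by
    obtain ⟨v, -, rfl⟩ := mem_image.1 hl
    exact ⟨List.cons_ne_nil _ _, List.nodup_singleton v, List.isChain_singleton v⟩
  cycles_are := by simp
  disj := disjoint_empty_right _
  pairwiseDisj := by simp
  covers v := ⟨[v], by simp, List.mem_singleton_self v⟩

variable (C : PCCover E)

theorem eq_of_mem_of_mem {l₁ l₂ : List V} (h₁ : l₁ ∈ C.paths ∪ C.cycles)
    (h₂ : l₂ ∈ C.paths ∪ C.cycles) {v : V} (hv₁ : v ∈ l₁) (hv₂ : v ∈ l₂) : l₁ = l₂ :=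
  by_contra fun h => C.pairwiseDisj l₁ h₁ l₂ h₂ h v hv₁ hv₂

theorem isDiPath_of_mem {l : List V} (hl : l ∈ C.paths ∪ C.cycles) : IsDiPath E l := by
  rcases mem_union.1 hl with hl | hl
  · exact C.paths_are l hl
  · obtain ⟨hne, h⟩ := C.cycles_are l hl
    exact ⟨hne, h.1, h.2.1⟩

theorem wReach_of_mem {l : List V} (hl : l ∈ C.paths ∪ C.cycles) {v w : V} (hv : v ∈ l)
    (hw : w ∈ l) : WReach E v w :=
  (C.isDiPath_of_mem hl).2.2.wReach v hv w hw

theorem sum_length [Fintype V] : ∑ l ∈ C.paths ∪ C.cycles, l.length = Fintype.card V := by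
  have huniv : (C.paths ∪ C.cycles).biUnion List.toFinset = univ :=
    eq_univ_of_forall fun v =>
      let ⟨l, hl, hv⟩ := C.covers v
      mem_biUnion.2 ⟨l, hl, List.mem_toFinset.2 hv⟩
  rw [← card_univ, ← huniv, card_biUnion]
  · exact sum_congr rfl fun l hl =>
      (List.toFinset_card_of_nodup (C.isDiPath_of_mem hl).2.1).symm
  · intro l₁ h₁ l₂ h₂ hne
    simp only [Function.onFun, disjoint_left, List.mem_toFinset]
    exact C.pairwiseDisj l₁ h₁ l₂ h₂ hne

-- The walk of a cycle returns to its first vertex, so its consecutive pairs are its edges.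
def walk (l : List V) : List V := if l ∈ C.cycles then l ++ l.take 1 else l

theorem walk_of_mem_paths {l : List V} (hl : l ∈ C.paths) : C.walk l = l :=
  if_neg (disjoint_left.1 C.disj hl)

theorem walk_of_mem_cycles {l : List V} (hl : l ∈ C.cycles) (hne : l ≠ []) :
    C.walk l = l ++ [l.head hne] := by
  obtain ⟨a, t, rfl⟩ := List.exists_cons_of_ne_nil hne
  exact if_pos hl

theorem mem_of_mem_walk {l : List V} {v : V} (hv : v ∈ C.walk l) : v ∈ l := by
  unfold walk at hv
  split_ifs at hv
  · exact (List.mem_append.1 hv).elim id fun h => List.take_subset _ _ h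
  · exact hv

theorem isChain_walk {l : List V} (hl : l ∈ C.paths ∪ C.cycles) :
    (C.walk l).IsChain (fun u v => (u, v) ∈ E) := by
  rcases mem_union.1 hl with hl | hl
  · rw [C.walk_of_mem_paths hl]
    exact (C.paths_are l hl).2.2
  · obtain ⟨hne, -, hch, hcl⟩ := C.cycles_are l hl
    rw [C.walk_of_mem_cycles hl hne]
    exact List.isChain_append.2
      ⟨hch, List.isChain_singleton _, by simpa [List.getLast?_eq_some_getLast hne]⟩

theorem nodup_dropLast_walk {l : List V} (hl : l ∈ C.paths ∪ C.cycles) :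
    (C.walk l).dropLast.Nodup := by
  have hnd := (C.isDiPath_of_mem hl).2.1
  rcases mem_union.1 hl with hl | hl
  · rw [C.walk_of_mem_paths hl]
    exact hnd.sublist (List.dropLast_sublist l)
  · rw [C.walk_of_mem_cycles hl (C.isDiPath_of_mem (mem_union_right _ hl)).1,
      List.dropLast_concat]
    exact hnd

theorem nodup_tail_walk {l : List V} (hl : l ∈ C.paths ∪ C.cycles) :
    (C.walk l).tail.Nodup := by
  obtain ⟨hne, hnd, -⟩ := C.isDiPath_of_mem hl
  rcases mem_union.1 hl with hl | hl
  · rw [C.walk_of_mem_paths hl]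
    exact hnd.sublist (List.tail_sublist l)
  · obtain ⟨a, t, rfl⟩ := List.exists_cons_of_ne_nil hne
    rw [C.walk_of_mem_cycles hl hne, List.head_cons, List.cons_append, List.tail_cons]
    exact (List.perm_append_singleton a t).nodup_iff.2 hnd

theorem mem_of_mem_consecutivePairs_walk {l : List V} {e : V × V}
    (he : e ∈ (C.walk l).consecutivePairs) : e.1 ∈ l ∧ e.2 ∈ l :=
  ⟨C.mem_of_mem_walk (List.fst_mem_of_mem_consecutivePairs he),
    C.mem_of_mem_walk (List.snd_mem_of_mem_consecutivePairs he)⟩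

def edges : Finset (V × V) :=
  (C.paths ∪ C.cycles).biUnion fun l => (C.walk l).consecutivePairs.toFinset

theorem mem_edges {e : V × V} :
    e ∈ C.edges ↔ ∃ l ∈ C.paths ∪ C.cycles, e ∈ (C.walk l).consecutivePairs := by
  simp only [edges, mem_biUnion, List.mem_toFinset]

theorem edges_subset : C.edges ⊆ E := fun _ he =>
  let ⟨_, hl, he⟩ := C.mem_edges.1 he
  (C.isChain_walk hl).rel_of_mem_consecutivePairs he

theorem exists_mem_of_mem_edges {e : V × V} (he : e ∈ C.edges) :
    ∃ l ∈ C.paths ∪ C.cycles, e.1 ∈ l ∧ e.2 ∈ l :=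
  let ⟨l, hl, he⟩ := C.mem_edges.1 he
  ⟨l, hl, C.mem_of_mem_consecutivePairs_walk he⟩

theorem injOn_fst_edges : Set.InjOn Prod.fst (C.edges : Set (V × V)) := by
  intro e₁ he₁ e₂ he₂ h
  obtain ⟨l₁, hl₁, he₁⟩ := C.mem_edges.1 he₁
  obtain ⟨l₂, hl₂, he₂⟩ := C.mem_edges.1 he₂
  obtain rfl := C.eq_of_mem_of_mem hl₁ hl₂ (C.mem_of_mem_consecutivePairs_walk he₁).1
    (h ▸ (C.mem_of_mem_consecutivePairs_walk he₂).1)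
  refine List.inj_on_of_nodup_map ?_ he₁ he₂ h
  rw [List.map_fst_consecutivePairs]
  exact C.nodup_dropLast_walk hl₁

theorem injOn_snd_edges : Set.InjOn Prod.snd (C.edges : Set (V × V)) := by
  intro e₁ he₁ e₂ he₂ h
  obtain ⟨l₁, hl₁, he₁⟩ := C.mem_edges.1 he₁
  obtain ⟨l₂, hl₂, he₂⟩ := C.mem_edges.1 he₂
  obtain rfl := C.eq_of_mem_of_mem hl₁ hl₂ (C.mem_of_mem_consecutivePairs_walk he₁).2
    (h ▸ (C.mem_of_mem_consecutivePairs_walk he₂).2)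
  refine List.inj_on_of_nodup_map ?_ he₁ he₂ h
  rw [List.map_snd_consecutivePairs]
  exact C.nodup_tail_walk hl₁

theorem card_edges_add_card_paths [Fintype V] : #C.edges + #C.paths = Fintype.card V := by
  have hdisj : (↑(C.paths ∪ C.cycles) : Set (List V)).PairwiseDisjoint
      fun l => (C.walk l).consecutivePairs.toFinset := by
    intro l₁ hl₁ l₂ hl₂ hne
    refine disjoint_left.2 fun e he₁ he₂ => hne ?_
    rw [List.mem_toFinset] at he₁ he₂
    exact C.eq_of_mem_of_mem hl₁ hl₂ (C.mem_of_mem_consecutivePairs_walk he₁).1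
      (C.mem_of_mem_consecutivePairs_walk he₂).1
  have hcard : ∀ l ∈ C.paths ∪ C.cycles,
      #(C.walk l).consecutivePairs.toFinset = (C.walk l).length - 1 := fun l hl => by
    rw [List.toFinset_card_of_nodup (List.nodup_consecutivePairs (C.nodup_dropLast_walk hl)),
      List.length_consecutivePairs]
  rw [edges, card_biUnion hdisj, sum_congr rfl hcard, ← C.sum_length, sum_union C.disj,
    sum_union C.disj, card_eq_sum_ones, add_right_comm, ← sum_add_distrib]
  congr 1
  · refine sum_congr rfl fun l hl => ?_
    have := List.length_pos_iff.2 (C.paths_are l hl).1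
    rw [C.walk_of_mem_paths hl]
    omega
  · refine sum_congr rfl fun l hl => ?_
    obtain ⟨hne, -⟩ := C.cycles_are l hl
    simp [C.walk_of_mem_cycles hl hne]

theorem exists_mem_paths_getLast_eq {v : V} (hv : ∀ w, (v, w) ∉ C.edges) :
    ∃ l ∈ C.paths, ∃ hne : l ≠ [], l.getLast hne = v := by
  obtain ⟨l, hl, hvl⟩ := C.covers v
  by_contra! hlast
  have hdrop : v ∈ (C.walk l).dropLast := by
    rcases mem_union.1 hl with hp | hc
    · rw [C.walk_of_mem_paths hp]
      exact List.mem_dropLast_of_mem_of_ne_getLast hvl (hlast l hp _).symm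
    · rw [C.walk_of_mem_cycles hc (C.cycles_are l hc).1, List.dropLast_concat]
      exact hvl
  rw [← List.map_fst_consecutivePairs] at hdrop
  obtain ⟨⟨_, w⟩, he, rfl⟩ := List.mem_map.1 hdrop
  exact hv w (C.mem_edges.2 ⟨l, hl, he⟩)

theorem exists_mem_paths_head_eq {v : V} (hv : ∀ u, (u, v) ∉ C.edges) :
    ∃ l ∈ C.paths, ∃ hne : l ≠ [], l.head hne = v := by
  obtain ⟨l, hl, hvl⟩ := C.covers v
  by_contra! hhead
  obtain ⟨a, t, rfl⟩ := List.exists_cons_of_ne_nil (C.isDiPath_of_mem hl).1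
  have htail : v ∈ (C.walk (a :: t)).tail := by
    rcases mem_union.1 hl with hp | hc
    · rw [C.walk_of_mem_paths hp]
      exact (List.mem_cons.1 hvl).resolve_left fun h => hhead _ hp (List.cons_ne_nil _ _) h.symm
    · rw [C.walk_of_mem_cycles hc (List.cons_ne_nil _ _)]
      simpa [or_comm] using hvl
  rw [← List.map_snd_consecutivePairs] at htail
  obtain ⟨⟨u, _⟩, he, rfl⟩ := List.mem_map.1 htail
  exact hv u (C.mem_edges.2 ⟨_, hl, he⟩)

theorem mem_iff_wReach_of_edges_eq (hC : C.edges = E) {l : List V}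
    (hl : l ∈ C.paths ∪ C.cycles) {v : V} (hv : v ∈ l) (w : V) : w ∈ l ↔ WReach E v w := by
  refine ⟨C.wReach_of_mem hl hv, fun h => ?_⟩
  induction h with
  | refl => exact hv
  | tail _ hxy ih =>
    rw [← hC] at hxy
    rcases hxy with hxy | hxy <;> obtain ⟨l', hl', h₁, h₂⟩ := C.exists_mem_of_mem_edges hxy
    · exact C.eq_of_mem_of_mem hl' hl h₁ ih ▸ h₂
    · exact C.eq_of_mem_of_mem hl' hl h₂ ih ▸ h₁

def closePath {l : List V} (hl : l ∈ C.paths) (hne : l ≠ [])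
    (hE : (l.getLast hne, l.head hne) ∈ E) : PCCover E where
  paths := C.paths.erase l
  cycles := insert l C.cycles
  paths_are l' hl' := C.paths_are l' (mem_of_mem_erase hl')
  cycles_are l' hl' := by
    rcases mem_insert.1 hl' with rfl | hl'
    · obtain ⟨-, hnd, hch⟩ := C.paths_are l' hl
      exact ⟨hne, hnd, hch, hE⟩
    · exact C.cycles_are l' hl'
  disj := disjoint_insert_right.2
    ⟨notMem_erase _ _, disjoint_of_subset_left (erase_subset _ _) C.disj⟩
  pairwiseDisj := by
    rw [union_insert, ← insert_union, insert_erase hl]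
    exact C.pairwiseDisj
  covers := by
    rw [union_insert, ← insert_union, insert_erase hl]
    exact C.covers

theorem card_paths_closePath_lt {l : List V} (hl : l ∈ C.paths) (hne : l ≠ [])
    (hE : (l.getLast hne, l.head hne) ∈ E) : #(C.closePath hl hne hE).paths < #C.paths :=
  card_erase_lt_of_mem hl

theorem mem_union_of_mem_join {l₁ l₂ l : List V} (h₁ : l₁ ∈ C.paths) (h₂ : l₂ ∈ C.paths)
    (hl : l ∈ insert (l₁ ++ l₂) ((C.paths.erase l₁).erase l₂) ∪ C.cycles) :
    l = l₁ ++ l₂ ∨ (l ∈ C.paths ∪ C.cycles ∧ l ≠ l₁ ∧ l ≠ l₂) := by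
  simp only [mem_union, mem_insert, mem_erase] at hl
  rcases hl with (rfl | ⟨hl₂, hl₁, hl⟩) | hl
  · exact .inl rfl
  · exact .inr ⟨mem_union_left _ hl, hl₁, hl₂⟩
  · refine .inr ⟨mem_union_right _ hl, ?_, ?_⟩ <;> rintro rfl
    exacts [disjoint_left.1 C.disj h₁ hl, disjoint_left.1 C.disj h₂ hl]

theorem notMem_append_of_mem {l₁ l₂ l : List V} (h₁ : l₁ ∈ C.paths) (h₂ : l₂ ∈ C.paths)
    (hl : l ∈ C.paths ∪ C.cycles) (hl₁ : l ≠ l₁) (hl₂ : l ≠ l₂) {v : V} (hv : v ∈ l) :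
    v ∉ l₁ ++ l₂ := by
  rw [List.mem_append]
  rintro (hv' | hv')
  exacts [hl₁ (C.eq_of_mem_of_mem hl (mem_union_left _ h₁) hv hv'),
    hl₂ (C.eq_of_mem_of_mem hl (mem_union_left _ h₂) hv hv')]

def joinPaths {l₁ l₂ : List V} (h₁ : l₁ ∈ C.paths) (h₂ : l₂ ∈ C.paths) (h : l₁ ≠ l₂)
    (hE : ∀ x ∈ l₁.getLast?, ∀ y ∈ l₂.head?, (x, y) ∈ E) : PCCover E where
  paths := insert (l₁ ++ l₂) ((C.paths.erase l₁).erase l₂)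
  cycles := C.cycles
  paths_are l hl := by
    rcases mem_insert.1 hl with rfl | hl
    · exact (C.paths_are _ h₁).append (C.paths_are _ h₂)
        (C.pairwiseDisj _ (mem_union_left _ h₁) _ (mem_union_left _ h₂) h) hE
    · exact C.paths_are l (mem_of_mem_erase (mem_of_mem_erase hl))
  cycles_are := C.cycles_are
  disj := by
    refine disjoint_insert_left.2 ⟨fun hc => ?_,
      disjoint_of_subset_left ((erase_subset _ _).trans (erase_subset _ _)) C.disj⟩
    obtain ⟨v, hv⟩ := List.exists_mem_of_ne_nil _ (C.paths_are _ h₁).1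
    have := C.eq_of_mem_of_mem (mem_union_left _ h₁) (mem_union_right _ hc) hv
      (List.mem_append_left _ hv)
    exact (C.paths_are _ h₂).1 (List.append_right_eq_self.1 this.symm)
  pairwiseDisj l hl l' hl' hne v hv hv' := by
    rcases C.mem_union_of_mem_join h₁ h₂ hl with rfl | ⟨hl, hl₁, hl₂⟩ <;>
      rcases C.mem_union_of_mem_join h₁ h₂ hl' with rfl | ⟨hl', hl₁', hl₂'⟩
    · exact hne rfl
    · exact C.notMem_append_of_mem h₁ h₂ hl' hl₁' hl₂' hv' hv
    · exact C.notMem_append_of_mem h₁ h₂ hl hl₁ hl₂ hv hv'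
    · exact C.pairwiseDisj l hl l' hl' hne v hv hv'
  covers v := by
    obtain ⟨l, hl, hv⟩ := C.covers v
    have hjoin : l₁ ++ l₂ ∈ insert (l₁ ++ l₂) ((C.paths.erase l₁).erase l₂) ∪ C.cycles :=
      mem_union_left _ (mem_insert_self _ _)
    by_cases hl₁ : l = l₁
    · exact ⟨_, hjoin, List.mem_append_left _ (hl₁ ▸ hv)⟩
    by_cases hl₂ : l = l₂
    · exact ⟨_, hjoin, List.mem_append_right _ (hl₂ ▸ hv)⟩
    refine ⟨l, ?_, hv⟩
    rcases mem_union.1 hl with hl | hl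
    · exact mem_union_left _ (mem_insert_of_mem (mem_erase.2 ⟨hl₂, mem_erase.2 ⟨hl₁, hl⟩⟩))
    · exact mem_union_right _ hl

theorem card_paths_joinPaths_lt {l₁ l₂ : List V} (h₁ : l₁ ∈ C.paths) (h₂ : l₂ ∈ C.paths)
    (h : l₁ ≠ l₂) (hE : ∀ x ∈ l₁.getLast?, ∀ y ∈ l₂.head?, (x, y) ∈ E) :
    #(C.joinPaths h₁ h₂ h hE).paths < #C.paths := by
  have := card_insert_le (l₁ ++ l₂) ((C.paths.erase l₁).erase l₂)
  have := card_erase_lt_of_mem (mem_erase.2 ⟨Ne.symm h, h₂⟩)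
  have := card_erase_lt_of_mem h₁
  exact lt_of_le_of_lt (by assumption) (by omega)

theorem exists_edges_eq [Fintype V] {F : Finset (V × V)}
    (hfst : Set.InjOn Prod.fst (F : Set (V × V))) (hsnd : Set.InjOn Prod.snd (F : Set (V × V))) :
    ∃ C : PCCover F, C.edges = F := by
  have : Nonempty (PCCover F) := ⟨singletons F⟩
  let C := Function.argmin fun C : PCCover F => #C.paths
  have hC (D : PCCover F) : #C.paths ≤ #D.paths := Function.argmin_le (fun C => #C.paths) D
  refine ⟨C, C.edges_subset.antisymm fun ⟨a, b⟩ hab => by_contra fun hnot => ?_⟩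
  obtain ⟨l₁, h₁, hne₁, rfl⟩ :=
    C.exists_mem_paths_getLast_eq fun w hw => hnot (hfst (C.edges_subset hw) hab rfl ▸ hw)
  obtain ⟨l₂, h₂, hne₂, rfl⟩ :=
    C.exists_mem_paths_head_eq fun u hu => hnot (hsnd (C.edges_subset hu) hab rfl ▸ hu)
  by_cases h : l₁ = l₂
  · subst h
    exact (C.card_paths_closePath_lt h₁ hne₁ hab).not_ge (hC _)
  · refine (C.card_paths_joinPaths_lt h₁ h₂ h ?_).not_ge (hC _)
    simpa [List.getLast?_eq_some_getLast hne₁, List.head?_eq_some_head hne₂] using hab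

end PCCover

theorem stmt3 [Fintype V] (E : Finset (V × V)) (M : Finset ((V ⊕ V) × (V ⊕ V)))
    (hsub : M ⊆ splitEdges E) (hmatch : IsMatching M)
    (hmax : ∀ M' : Finset ((V ⊕ V) × (V ⊕ V)),
      M' ⊆ splitEdges E → IsMatching M' → M'.card ≤ M.card) :
    (∃ C : PCCover (pullback E M),
      (∀ l ∈ C.paths ∪ C.cycles, ∀ v ∈ l, ∀ w : V,
        (w ∈ l ↔ WReach (pullback E M) v w)) ∧
      (∀ D : PCCover E, C.paths.card ≤ D.paths.card) ∧
      C.paths.card = Fintype.card V - M.card) ∧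
    IsLeast {m : ℕ | ∃ D : PCCover E, D.paths.card = m} (Fintype.card V - M.card) := by
  obtain ⟨C, hCF⟩ := PCCover.exists_edges_eq (injOn_fst_pullback (E := E) hmatch)
    (injOn_snd_pullback hmatch)
  have hC : #C.paths = Fintype.card V - #M := by
    have := C.card_edges_add_card_paths
    rw [hCF, card_pullback hsub] at this
    omega
  have hmin (D : PCCover E) : #C.paths ≤ #D.paths := by
    have hD : #(D.edges.image splitEdge) ≤ #M := hmax _ (image_subset_image D.edges_subset)
      (isMatching_image_splitEdge D.injOn_fst_edges D.injOn_snd_edges)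
    have := D.card_edges_add_card_paths
    rw [card_image_of_injective _ splitEdge_injective] at hD
    omega
  refine ⟨⟨C, fun l hl v hv => C.mem_iff_wReach_of_edges_eq hCF hl hv, hmin, hC⟩,
    ⟨C.mono (filter_subset _ _), hC⟩, ?_⟩
  rintro _ ⟨D, rfl⟩
  exact hC ▸ hmin D
end

section
/- Every finite directed graph G admits a necklace cover in which the number of open necklaces equals the number of vertices of G having in-degree zero; consequently, this number is the minimum number of open necklaces over all necklace covers of G. -/
/-!
Keep one incoming edge at every vertex of `G` that has one. In the resulting subgraph every
in-degree is at most one, so two weakly connected vertices have a common ancestor; hence each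
weak component is a necklace containing at most one vertex of in-degree zero. A component with
such a source is open; one without is closed, since walking backwards along the kept edges
eventually runs into a cycle. So the open components correspond to the sources of `G`.
Conversely, in any necklace cover a source of `G` is a source of its necklace, and a necklace
with a source is open and has no other source.
-/

open scoped Classical

variable {V : Type*} [DecidableEq V]

/-- `H = (verts, edges)` is a necklace of the digraph `E`: a weakly connected subgraph of `E`
in which every vertex has in-degree at most one. -/
def IsNecklace (E : Finset (V × V)) (H : Finset V × Finset (V × V)) : Prop :=
  H.1.Nonempty ∧ H.2 ⊆ E ∧ (∀ e ∈ H.2, e.1 ∈ H.1 ∧ e.2 ∈ H.1) ∧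
  (∀ a ∈ H.1, ∀ b ∈ H.1,
    Relation.ReflTransGen (fun x y => (x, y) ∈ H.2 ∨ (y, x) ∈ H.2) a b) ∧
  (∀ v ∈ H.1, indeg H.2 v ≤ 1)

/-- A necklace is closed if it contains a directed cycle (and open otherwise). -/
def IsClosedNecklace (H : Finset V × Finset (V × V)) : Prop :=
  ∃ l : List V, IsDiCycle H.2 l

/-- `C` is a necklace cover of the digraph `E`: a collection of necklaces with pairwise
disjoint vertex sets covering every vertex. -/
def IsNecklaceCover (E : Finset (V × V)) (C : Finset (Finset V × Finset (V × V))) : Prop :=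
  (∀ H ∈ C, IsNecklace E H) ∧
  (∀ H₁ ∈ C, ∀ H₂ ∈ C, H₁ ≠ H₂ → Disjoint H₁.1 H₂.1) ∧
  (∀ v : V, ∃ H ∈ C, v ∈ H.1)

/-- `N_O`: the number of open necklaces of the cover `C`. -/
noncomputable def numOpen (C : Finset (Finset V × Finset (V × V))) : ℕ :=
  (C.filter (fun H => ¬ IsClosedNecklace H)).card

/-- Total number of vertices of out-degree zero within their necklace, over the cover `C`. -/
def numSinks (C : Finset (Finset V × Finset (V × V))) : ℕ :=
  ∑ H ∈ C, (H.1.filter (fun v => outdeg H.2 v = 0)).card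

/-- `N_L`: the number of pendant leaves of the cover `C` (total number of out-degree-zero
vertices within their necklace, minus the number of open necklaces). -/
noncomputable def numLeaves (C : Finset (Finset V × Finset (V × V))) : ℕ :=
  numSinks C - numOpen C


open Finset Relation Function

namespace Relation

variable {α : Type*} {r : α → α → Prop} {a b : α}

theorem ReflTransGen.eq_of_forall_not_rel (hb : ∀ c, ¬ r c b) (h : ReflTransGen r a b) :
    a = b := by
  rcases h.cases_tail with rfl | ⟨c, -, hcb⟩
  · rfl
  · exact absurd hcb (hb c)

theorem ReflTransGen.exists_common_ancestor (hr : Relator.LeftUnique r)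
    (h : ReflTransGen (SymmGen r) a b) : ∃ c, ReflTransGen r c a ∧ ReflTransGen r c b := by
  induction h with
  | refl => exact ⟨a, .refl, .refl⟩
  | @tail m b _ hmb ih =>
    obtain ⟨c, hca, hcm⟩ := ih
    rcases hmb with hmb | hbm
    · exact ⟨c, hca, hcm.tail hmb⟩
    · rcases ReflTransGen.total_of_right_unique hr.flip (reflTransGen_swap.mpr hcm)
        (.single hbm) with hcb | hbc
      · exact ⟨b, (reflTransGen_swap.mp hcb).trans hca, .refl⟩
      · exact ⟨c, hca, reflTransGen_swap.mp hbc⟩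

theorem ReflTransGen.of_symmGen_of_forall_not_rel (hr : Relator.LeftUnique r)
    (ha : ∀ c, ¬ r c a) (h : ReflTransGen (SymmGen r) a b) : ReflTransGen r a b := by
  obtain ⟨c, hca, hcb⟩ := h.exists_common_ancestor hr
  rwa [hca.eq_of_forall_not_rel ha] at hcb

end Relation

theorem Function.exists_iterate_mem_periodicPts {α : Type*} [Finite α] (f : α → α) (x : α) :
    ∃ n, f^[n] x ∈ periodicPts f := by
  obtain ⟨i, j, hij, hfij⟩ := Finite.exists_ne_map_eq_of_infinite (f^[·] x)
  wlog hlt : i < j generalizing i j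
  · exact this j i hij.symm hfij.symm (by omega)
  refine ⟨i, mk_mem_periodicPts (n := j - i) (by omega) ?_⟩
  simp only [IsPeriodicPt, IsFixedPt, ← iterate_add_apply, Nat.sub_add_cancel hlt.le]
  exact hfij.symm

section Digraph

variable {α : Type*}

theorem WReach.symm {F : Finset (α × α)} {a b : α} (h : WReach F a b) : WReach F b a :=
  Std.Symm.symm (r := ReflTransGen (SymmGen fun x y => (x, y) ∈ F)) _ _ h

theorem IsDiCycle.exists_pred_mem {F : Finset (α × α)} {l : List α}
    (hl : IsDiCycle F l) {x : α} (hx : x ∈ l) : ∃ y ∈ l, (y, x) ∈ F := by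
  obtain ⟨hne, -, hchain, hclose⟩ := hl
  obtain ⟨i, hi, rfl⟩ := List.getElem_of_mem hx
  cases i with
  | zero => exact ⟨l.getLast hne, List.getLast_mem hne, by rwa [List.getElem_zero_eq_head]⟩
  | succ j =>
    exact ⟨l[j], List.getElem_mem _, List.isChain_iff_getElem.mp hchain j hi⟩

theorem IsDiCycle.mem_of_reflTransGen {F : Finset (α × α)} {l : List α}
    (hF : Relator.LeftUnique fun a b => (a, b) ∈ F) (hl : IsDiCycle F l) {a t : α}
    (h : ReflTransGen (fun a b => (a, b) ∈ F) a t) (ht : t ∈ l) : a ∈ l := by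
  induction h using ReflTransGen.head_induction_on with
  | refl => exact ht
  | head hac _ hc =>
    obtain ⟨y, hy, hyc⟩ := hl.exists_pred_mem hc
    rwa [hF hac hyc]

/-- The orbit of `p` runs against the edges, hence the `reverse`. -/
theorem isDiCycle_of_mem_periodicPts {F : Finset (α × α)} {p : α → α} {x : α}
    (hx : x ∈ periodicPts p) (hp : ∀ k, (p^[k + 1] x, p^[k] x) ∈ F) :
    IsDiCycle F ((List.range (minimalPeriod p x)).map (p^[·] x)).reverse := by
  have hpos := minimalPeriod_pos_of_mem_periodicPts hx
  have hnodup := nodup_periodicOrbit (f := p) (x := x)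
  rw [periodicOrbit_def, Cycle.nodup_coe_iff] at hnodup
  refine ⟨by simpa using hpos.ne', List.nodup_reverse.mpr hnodup, ?_, ?_⟩
  · show List.IsChain _ _
    rw [List.isChain_reverse, List.isChain_map, List.isChain_range]
    exact fun k _ => hp k
  · have hclose := hp (minimalPeriod p x - 1)
    rw [Nat.sub_add_cancel hpos, iterate_minimalPeriod] at hclose
    simpa only [List.getLast_reverse, List.head_reverse, List.head_map, List.getLast_map,
      List.head_range, List.getLast_range, iterate_zero_apply] using hclose

theorem exists_isDiCycle_of_forall_exists_pred [Finite α] {F : Finset (α × α)} {S : Set α}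
    (hS : S.Nonempty) (hpred : ∀ w ∈ S, ∃ u ∈ S, (u, w) ∈ F) : ∃ l, IsDiCycle F l := by
  choose! p hpS hpF using hpred
  obtain ⟨x₀, hx₀⟩ := hS
  have hiter : ∀ k, p^[k] x₀ ∈ S := fun k => Set.MapsTo.iterate hpS k hx₀
  obtain ⟨n, hn⟩ := exists_iterate_mem_periodicPts p x₀
  refine ⟨_, isDiCycle_of_mem_periodicPts hn fun k => ?_⟩
  rw [iterate_succ_apply', ← iterate_add_apply]
  exact hpF _ (hiter _)

end Digraph

theorem indeg_eq_zero_iff {F : Finset (V × V)} {v : V} : indeg F v = 0 ↔ ∀ a, (a, v) ∉ F := by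
  simp only [indeg, card_eq_zero, filter_eq_empty_iff, Prod.forall]
  exact ⟨fun h a ha => h a v ha rfl, fun h a b hab hb => h a (hb ▸ hab)⟩

theorem indeg_le_one_iff {F : Finset (V × V)} {v : V} :
    indeg F v ≤ 1 ↔ ∀ a b, (a, v) ∈ F → (b, v) ∈ F → a = b := by
  simp only [indeg, card_le_one, mem_filter, and_imp, Prod.forall, Prod.mk.injEq]
  constructor
  · intro h a b ha hb
    exact (h a v ha rfl b v hb rfl).1
  · rintro h a _ ha rfl b _ hb rfl
    exact ⟨h a b ha hb, rfl⟩

theorem indeg_mono {F E : Finset (V × V)} (h : F ⊆ E) (v : V) : indeg F v ≤ indeg E v :=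
  card_le_card (filter_subset_filter _ h)

section Necklace

variable {E : Finset (V × V)} {H : Finset V × Finset (V × V)} {v w : V}

theorem IsNecklace.mono {E' : Finset (V × V)} (hH : IsNecklace E H) (hE : E ⊆ E') :
    IsNecklace E' H :=
  ⟨hH.1, hH.2.1.trans hE, hH.2.2⟩

theorem IsNecklace.leftUnique (hH : IsNecklace E H) :
    Relator.LeftUnique fun a b => (a, b) ∈ H.2 := fun a b _ hac hbc =>
  indeg_le_one_iff.mp (hH.2.2.2.2 _ (hH.2.2.1 _ hac).2) a b hac hbc

theorem IsNecklace.reflTransGen_of_indeg_eq_zero (hH : IsNecklace E H) (hv : v ∈ H.1)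
    (hv₀ : indeg H.2 v = 0) (hw : w ∈ H.1) : ReflTransGen (fun a b => (a, b) ∈ H.2) v w :=
  (hH.2.2.2.1 v hv w hw).of_symmGen_of_forall_not_rel hH.leftUnique (indeg_eq_zero_iff.mp hv₀)

theorem IsNecklace.eq_of_indeg_eq_zero (hH : IsNecklace E H) (hv : v ∈ H.1) (hw : w ∈ H.1)
    (hv₀ : indeg H.2 v = 0) (hw₀ : indeg H.2 w = 0) : v = w :=
  (hH.reflTransGen_of_indeg_eq_zero hv hv₀ hw).eq_of_forall_not_rel (indeg_eq_zero_iff.mp hw₀)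

theorem IsNecklace.not_isClosedNecklace_of_indeg_eq_zero (hH : IsNecklace E H) (hv : v ∈ H.1)
    (hv₀ : indeg H.2 v = 0) : ¬ IsClosedNecklace H := by
  rintro ⟨l, hl⟩
  obtain ⟨t, ht⟩ := List.exists_mem_of_ne_nil l hl.1
  obtain ⟨s, -, hst⟩ := hl.exists_pred_mem ht
  have hvl := hl.mem_of_reflTransGen hH.leftUnique
    (hH.reflTransGen_of_indeg_eq_zero hv hv₀ (hH.2.2.1 _ hst).2) ht
  obtain ⟨y, -, hyv⟩ := hl.exists_pred_mem hvl
  exact indeg_eq_zero_iff.mp hv₀ y hyv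

theorem card_indeg_eq_zero_le_numOpen [Fintype V] {C : Finset (Finset V × Finset (V × V))}
    (hC : IsNecklaceCover E C) : #{v | indeg E v = 0} ≤ numOpen C := by
  obtain ⟨hneck, -, hcov⟩ := hC
  choose H hHC hvH using hcov
  have hsrc : ∀ v, indeg E v = 0 → indeg (H v).2 v = 0 := fun v hv =>
    Nat.le_zero.mp (hv ▸ indeg_mono (hneck _ (hHC v)).2.1 v)
  refine card_le_card_of_injOn H (fun v hv => ?_) (fun v hv w hw hvw => ?_)
  · rw [mem_coe, mem_filter] at hv ⊢
    exact ⟨hHC v, (hneck _ (hHC v)).not_isClosedNecklace_of_indeg_eq_zero (hvH v) (hsrc v hv.2)⟩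
  · rw [mem_coe, mem_filter] at hv hw
    exact (hneck _ (hHC w)).eq_of_indeg_eq_zero (hvw ▸ hvH v) (hvH w) (hvw ▸ hsrc v hv.2) (hsrc w hw.2)

end Necklace

section Components

variable {α : Type*} [Fintype α] {F : Finset (α × α)} {u : α}

noncomputable def component (F : Finset (α × α)) (u : α) : Finset α × Finset (α × α) :=
  (({w | WReach F u w} : Finset α), {e ∈ F | WReach F u e.1})

theorem mem_component_fst {w : α} : w ∈ (component F u).1 ↔ WReach F u w := by
  simp [component]

theorem mem_component_snd {e : α × α} : e ∈ (component F u).2 ↔ e ∈ F ∧ WReach F u e.1 := by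
  simp [component]

theorem component_eq_of_wReach {v : α} (h : WReach F u v) : component F u = component F v := by
  have hiff : ∀ w, WReach F u w ↔ WReach F v w := fun w => ⟨h.symm.trans, h.trans⟩
  simp only [component, hiff]

theorem wReach_component_snd {a b : α} (ha : WReach F u a) (h : WReach F a b) :
    WReach (component F u).2 a b := by
  induction h with
  | refl => exact .refl
  | @tail m b hm hmb ih =>
    have hum := ha.trans hm
    exact ih.tail <| hmb.imp (fun h => mem_component_snd.mpr ⟨h, hum⟩)
      (fun h => mem_component_snd.mpr ⟨h, hum.tail (.inr h)⟩)

end Components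

section ComponentNecklaces

variable [Fintype V] {F : Finset (V × V)} {u : V}

noncomputable def components (F : Finset (V × V)) : Finset (Finset V × Finset (V × V)) :=
  univ.image (component F)

theorem isNecklace_component (hF : ∀ v, indeg F v ≤ 1) (u : V) :
    IsNecklace F (component F u) := by
  refine ⟨⟨u, mem_component_fst.mpr .refl⟩, fun e he => (mem_component_snd.mp he).1,
    fun e he => ?_, fun a ha b hb => ?_,
    fun v _ => (indeg_mono (filter_subset _ _) v).trans (hF v)⟩
  · obtain ⟨he, hue⟩ := mem_component_snd.mp he
    exact ⟨mem_component_fst.mpr hue, mem_component_fst.mpr (hue.tail (.inl he))⟩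
  · rw [mem_component_fst] at ha hb
    exact wReach_component_snd ha (ha.symm.trans hb)

theorem isClosedNecklace_component (h : ∀ w, WReach F u w → indeg F w ≠ 0) :
    IsClosedNecklace (component F u) := by
  refine exists_isDiCycle_of_forall_exists_pred (S := {w | WReach F u w}) ⟨u, .refl⟩
    fun w hw => ?_
  obtain ⟨a, haw⟩ : ∃ a, (a, w) ∈ F := by simpa [indeg_eq_zero_iff] using h w hw
  have hua : WReach F u a := hw.tail (.inr haw)
  exact ⟨a, hua, mem_component_snd.mpr ⟨haw, hua⟩⟩

theorem isNecklaceCover_components {E : Finset (V × V)} (hFE : F ⊆ E)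
    (hF : ∀ v, indeg F v ≤ 1) : IsNecklaceCover E (components F) := by
  refine ⟨?_, ?_, fun v => ⟨_, mem_image_of_mem _ (mem_univ v), mem_component_fst.mpr .refl⟩⟩
  · simp only [components, forall_mem_image]
    exact fun u _ => (isNecklace_component hF u).mono hFE
  · simp only [components, forall_mem_image]
    intro u _ v _ hne
    refine disjoint_left.mpr fun w hu hv => hne ?_
    rw [mem_component_fst] at hu hv
    exact component_eq_of_wReach (hu.trans hv.symm)

theorem numOpen_components_le : numOpen (components F) ≤ #{v | indeg F v = 0} := by
  refine card_le_card_of_surjOn (component F) fun H hH => ?_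
  obtain ⟨hHC, hopen⟩ := mem_filter.mp hH
  obtain ⟨u, -, rfl⟩ := mem_image.mp hHC
  obtain ⟨w, huw, hw⟩ : ∃ w, WReach F u w ∧ indeg F w = 0 := by
    by_contra! h
    exact hopen (isClosedNecklace_component h)
  exact ⟨w, by simpa using hw, (component_eq_of_wReach huw).symm⟩

theorem numOpen_components (hF : ∀ v, indeg F v ≤ 1) :
    numOpen (components F) = #{v | indeg F v = 0} :=
  numOpen_components_le.antisymm
    (card_indeg_eq_zero_le_numOpen (isNecklaceCover_components subset_rfl hF))

end ComponentNecklaces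

theorem exists_subset_indeg_le_one (E : Finset (V × V)) :
    ∃ F ⊆ E, (∀ v, indeg F v ≤ 1) ∧ ∀ v, indeg F v = 0 ↔ indeg E v = 0 := by
  choose! parent hparent using fun v (h : ∃ a, (a, v) ∈ E) => h
  refine ⟨{e ∈ E | e.1 = parent e.2}, filter_subset _ _, fun v => ?_, fun v => ?_⟩
  · refine indeg_le_one_iff.mpr fun a b ha hb => ?_
    exact (mem_filter.mp ha).2.trans (mem_filter.mp hb).2.symm
  · refine ⟨fun h => indeg_eq_zero_iff.mpr fun a ha => ?_,
      fun h => Nat.le_zero.mp (h ▸ indeg_mono (filter_subset _ _) v)⟩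
    exact indeg_eq_zero_iff.mp h (parent v) (mem_filter.mpr ⟨hparent v ⟨a, ha⟩, rfl⟩)

theorem stmt7 [Fintype V] (E : Finset (V × V)) :
    (∃ C : Finset (Finset V × Finset (V × V)), IsNecklaceCover E C ∧
        numOpen C = (Finset.univ.filter (fun v : V => indeg E v = 0)).card) ∧
    (∀ C : Finset (Finset V × Finset (V × V)), IsNecklaceCover E C →
        (Finset.univ.filter (fun v : V => indeg E v = 0)).card ≤ numOpen C) := by
  obtain ⟨F, hFE, hF, hsrc⟩ := exists_subset_indeg_le_one E
  refine ⟨⟨components F, isNecklaceCover_components hFE hF, ?_⟩,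
    fun C hC => card_indeg_eq_zero_le_numOpen hC⟩
  simp only [numOpen_components hF, hsrc]
end
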